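/- (Proposition, case B > 0.) Let τ > 0 and ϑ ∈ (0,π/2) with B = (τ²+1)cos²ϑ − 1 > 0, and set ã = −τ⁻²·sin²ϑ·B, b̃ = −2τ⁻¹·B, α₁ = (τ·√B·cos ϑ + B)/τ, α₂ = (τ·√B·cos ϑ − B)/τ. Let F : ℝ → ℝ⁴ be a smooth function satisfying, for all u: F''(u) = ã·F(u) − b̃·J₁F'(u), ⟨F(u),F(u)⟩ = 1, ⟨F'(u),F'(u)⟩ = ã, and ⟨J₁F(u),F'(u)⟩ = −τ⁻¹·sin²ϑ. Then there exist mutually ⟨·,·⟩-orthogonal constant vectors g¹, g², g³, g⁴ ∈ ℝ⁴ with ⟨g¹,g¹⟩ = ⟨g²,g²⟩ = −τα₂/(2B) and ⟨g³,g³⟩ = ⟨g⁴,g⁴⟩ = τα₁/(2B), such that F(u) = cos(α₁u)·g¹ + sin(α₁u)·g² + cos(α₂u)·g³ + sin(α₂u)·g⁴ for all u ∈ ℝ. -/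

import Mathlib

noncomputable section

/-- The semi-definite inner product of signature (2,2) on ℝ⁴. -/
def ip (v w : Fin 4 → ℝ) : ℝ := v 0 * w 0 + v 1 * w 1 - v 2 * w 2 - v 3 * w 3

/-- The complex structure J₁ of ℝ⁴. -/
def J1 (v : Fin 4 → ℝ) : Fin 4 → ℝ := ![-v 1, v 0, -v 3, v 2]

lemma J1_hasDerivAt {W : ℝ → Fin 4 → ℝ} {W' : Fin 4 → ℝ} {u : ℝ}
    (h : HasDerivAt W W' u) : HasDerivAt (fun t => J1 (W t)) (J1 W') u := by
  have hc : ∀ i, HasDerivAt (fun t => W t i) (W' i) u := hasDerivAt_pi.mp h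
  rw [hasDerivAt_pi]
  intro i
  fin_cases i
  · simpa [J1] using (hc 1).fun_neg
  · simpa [J1] using hc 0
  · simpa [J1] using (hc 3).fun_neg
  · simpa [J1] using hc 2

lemma rot (β : ℝ) (W : ℝ → Fin 4 → ℝ)
    (h : ∀ t, HasDerivAt W (β • J1 (W t)) t) (u : ℝ) :
    W u = Real.cos (β * u) • W 0 + Real.sin (β * u) • J1 (W 0) := by
  set V : ℝ → Fin 4 → ℝ :=
    fun t => Real.cos (β * t) • W t - Real.sin (β * t) • J1 (W t) with hVdef
  have hV : ∀ t, HasDerivAt V 0 t := by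
    intro t
    have hlin : HasDerivAt (fun x : ℝ => β * x) β t := by
      simpa using (hasDerivAt_id t).const_mul β
    have hcos : HasDerivAt (fun x : ℝ => Real.cos (β * x)) (-Real.sin (β * t) * β) t :=
      (Real.hasDerivAt_cos (β * t)).comp t hlin
    have hsin : HasDerivAt (fun x : ℝ => Real.sin (β * x)) (Real.cos (β * t) * β) t :=
      (Real.hasDerivAt_sin (β * t)).comp t hlin
    have hw := h t
    have hjw : HasDerivAt (fun x => J1 (W x)) (J1 (β • J1 (W t))) t := J1_hasDerivAt hw
    have hd := (hcos.smul hw).sub (hsin.smul hjw)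
    refine HasDerivAt.congr_deriv hd ?_
    funext i
    fin_cases i <;>
      simp [J1, Matrix.vecHead, Matrix.vecTail, Function.comp, Pi.smul_apply, smul_eq_mul,
        Pi.sub_apply, Pi.add_apply, show (2:Fin 3).succ = (3:Fin 4) from rfl] <;> ring
  have hconst : ∀ t, V t = V 0 := fun t =>
    is_const_of_deriv_eq_zero (fun x => (hV x).differentiableAt)
      (fun x => (hV x).deriv) t 0
  have hV0 : V 0 = W 0 := by
    simp [hVdef]
  have hVu : V u = W 0 := (hconst u).trans hV0
  have key : W u = Real.cos (β * u) • V u + Real.sin (β * u) • J1 (V u) := by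
    funext i
    have pyth := Real.sin_sq_add_cos_sq (β * u)
    fin_cases i <;>
      simp only [hVdef, J1, Matrix.cons_val_zero, Matrix.cons_val_one, Matrix.head_cons,
        Matrix.vecHead, Matrix.vecTail, Function.comp, Pi.smul_apply, smul_eq_mul,
        Pi.sub_apply, Pi.add_apply, Matrix.cons_val', Matrix.cons_val_fin_one, Matrix.empty_val',
        Fin.isValue] <;>
      simp [Matrix.vecHead, Matrix.vecTail, Function.comp]
    · linear_combination (-(W u 0)) * pyth
    · linear_combination (-(W u 1)) * pyth
    · linear_combination (-(W u 2)) * pyth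
    · linear_combination (-(W u 3)) * pyth
  rw [key, hVu]

set_option maxHeartbeats 2000000 in
theorem position_vector_B_pos (τ ϑ B a b α₁ α₂ : ℝ)
    (hτ : 0 < τ) (hϑ : ϑ ∈ Set.Ioo 0 (Real.pi / 2))
    (hB : B = (τ ^ 2 + 1) * Real.cos ϑ ^ 2 - 1) (hBpos : 0 < B)
    (ha : a = -(Real.sin ϑ ^ 2 * B) / τ ^ 2) (hb : b = -(2 * B) / τ)
    (hα₁ : α₁ = (τ * Real.sqrt B * Real.cos ϑ + B) / τ)
    (hα₂ : α₂ = (τ * Real.sqrt B * Real.cos ϑ - B) / τ)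
    (F : ℝ → Fin 4 → ℝ) (hF : ContDiff ℝ (⊤ : ℕ∞) F)
    (hode : ∀ u, deriv (deriv F) u = a • F u - b • J1 (deriv F u))
    (hFF : ∀ u, ip (F u) (F u) = 1)
    (hFuFu : ∀ u, ip (deriv F u) (deriv F u) = a)
    (hJFFu : ∀ u, ip (J1 (F u)) (deriv F u) = -(Real.sin ϑ ^ 2) / τ) :
    ∃ g₁ g₂ g₃ g₄ : Fin 4 → ℝ,
      ip g₁ g₂ = 0 ∧ ip g₁ g₃ = 0 ∧ ip g₁ g₄ = 0 ∧
      ip g₂ g₃ = 0 ∧ ip g₂ g₄ = 0 ∧ ip g₃ g₄ = 0 ∧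
      ip g₁ g₁ = -(τ * α₂) / (2 * B) ∧ ip g₂ g₂ = -(τ * α₂) / (2 * B) ∧
      ip g₃ g₃ = τ * α₁ / (2 * B) ∧ ip g₄ g₄ = τ * α₁ / (2 * B) ∧
      ∀ u : ℝ, F u = Real.cos (α₁ * u) • g₁ + Real.sin (α₁ * u) • g₂ +
                     Real.cos (α₂ * u) • g₃ + Real.sin (α₂ * u) • g₄ := by
  obtain ⟨hϑ0, hϑhalf⟩ := hϑ
  have hτ' : τ ≠ 0 := ne_of_gt hτ
  have hcospos : 0 < Real.cos ϑ :=
    Real.cos_pos_of_mem_Ioo ⟨by linarith [Real.pi_pos], hϑhalf⟩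
  have hcne : Real.cos ϑ ≠ 0 := ne_of_gt hcospos
  obtain ⟨r, hrpos, hrB⟩ : ∃ r : ℝ, 0 < r ∧ B = r ^ 2 :=
    ⟨Real.sqrt B, Real.sqrt_pos.mpr hBpos, (Real.sq_sqrt hBpos.le).symm⟩
  have hrne : r ≠ 0 := ne_of_gt hrpos
  have hsq : Real.sqrt B = r := by rw [hrB]; exact Real.sqrt_sq hrpos.le
  have hα₁r : α₁ = (τ * r * Real.cos ϑ + r ^ 2) / τ := by rw [hα₁, hsq, hrB]
  have hα₂r : α₂ = (τ * r * Real.cos ϑ - r ^ 2) / τ := by rw [hα₂, hsq, hrB]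
  have hSin : Real.sin ϑ ^ 2 = τ ^ 2 * Real.cos ϑ ^ 2 - r ^ 2 := by
    have := Real.sin_sq_add_cos_sq ϑ
    rw [hrB] at hB
    nlinarith
  have har : a = -((τ ^ 2 * Real.cos ϑ ^ 2 - r ^ 2) * r ^ 2) / τ ^ 2 := by
    rw [ha, hSin, hrB]
  have hab : b = α₂ - α₁ := by
    rw [hb, hα₁r, hα₂r, hrB]; field_simp; ring
  have haa : a = -(α₁ * α₂) := by
    rw [har, hα₁r, hα₂r]; field_simp; ring
  have hsum : α₁ + α₂ = 2 * r * Real.cos ϑ := by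
    rw [hα₁r, hα₂r]; field_simp; ring
  have hsumne : α₁ + α₂ ≠ 0 := by rw [hsum]; positivity
  -- differentiability
  have hFd : Differentiable ℝ F := hF.differentiable (by simp)
  have hFd' : Differentiable ℝ (deriv F) := by
    have h1 : ContDiff ℝ (⊤ : ℕ∞) F := hF.of_le (by simp)
    exact (contDiff_infty_iff_deriv.mp h1).2.differentiable (by simp)
  have hcomp : ∀ t, HasDerivAt F (deriv F t) t := fun t => (hFd t).hasDerivAt
  have hcomp' : ∀ t, HasDerivAt (deriv F) (deriv (deriv F) t) t := fun t => (hFd' t).hasDerivAt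
  -- the two rotating vector fields
  set W₁ : ℝ → Fin 4 → ℝ := fun t => deriv F t + α₂ • J1 (F t) with hW₁def
  set W₂ : ℝ → Fin 4 → ℝ := fun t => deriv F t - α₁ • J1 (F t) with hW₂def
  have hW₁ : ∀ t, HasDerivAt W₁ (α₁ • J1 (W₁ t)) t := by
    intro t
    have h' := (hcomp' t).add ((J1_hasDerivAt (hcomp t)).const_smul α₂)
    refine HasDerivAt.congr_deriv h' (Eq.symm ?_)
    rw [hode t]
    funext i
    fin_cases i <;>
      simp [hW₁def, J1, Matrix.vecHead, Matrix.vecTail, Function.comp, Pi.smul_apply,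
        smul_eq_mul, Pi.sub_apply, Pi.add_apply, show (2:Fin 3).succ = (3:Fin 4) from rfl]
    · linear_combination (-(F t 0)) * haa - (deriv F t 1) * hab
    · linear_combination (-(F t 1)) * haa + (deriv F t 0) * hab
    · linear_combination (-(F t 2)) * haa - (deriv F t 3) * hab
    · linear_combination (-(F t 3)) * haa + (deriv F t 2) * hab
  have hW₂ : ∀ t, HasDerivAt W₂ ((-α₂) • J1 (W₂ t)) t := by
    intro t
    have h' := (hcomp' t).sub ((J1_hasDerivAt (hcomp t)).const_smul α₁)
    refine HasDerivAt.congr_deriv h' (Eq.symm ?_)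
    rw [hode t]
    funext i
    fin_cases i <;>
      simp [hW₂def, J1, Matrix.vecHead, Matrix.vecTail, Function.comp, Pi.smul_apply,
        smul_eq_mul, Pi.sub_apply, Pi.add_apply, show (2:Fin 3).succ = (3:Fin 4) from rfl]
    · linear_combination (-(F t 0)) * haa - (deriv F t 1) * hab
    · linear_combination (-(F t 1)) * haa + (deriv F t 0) * hab
    · linear_combination (-(F t 2)) * haa - (deriv F t 3) * hab
    · linear_combination (-(F t 3)) * haa + (deriv F t 2) * hab
  -- invariants at 0
  have k1 := hFF 0
  have k2 := hFuFu 0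
  have k3 := hJFFu 0
  have k4 : ip (F 0) (deriv F 0) = 0 := by
    have hq : ∀ i, HasDerivAt (fun u => F u i) (deriv F 0 i) 0 := hasDerivAt_pi.mp (hcomp 0)
    have hD : HasDerivAt (fun u => ip (F u) (F u))
        (deriv F 0 0 * F 0 0 + F 0 0 * deriv F 0 0 + (deriv F 0 1 * F 0 1 + F 0 1 * deriv F 0 1)
          - (deriv F 0 2 * F 0 2 + F 0 2 * deriv F 0 2)
          - (deriv F 0 3 * F 0 3 + F 0 3 * deriv F 0 3)) 0 := by
      simp only [ip]
      exact ((((hq 0).mul (hq 0)).add ((hq 1).mul (hq 1))).sub ((hq 2).mul (hq 2))).sub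
        ((hq 3).mul (hq 3))
    have hC : HasDerivAt (fun u => ip (F u) (F u)) 0 0 := by
      have he : (fun u => ip (F u) (F u)) = fun _ => (1 : ℝ) := funext hFF
      rw [he]; exact hasDerivAt_const 0 1
    have := hD.unique hC
    simp only [ip]
    linarith
  simp only [ip] at k1 k2 k4
  simp only [ip, J1, Matrix.cons_val_zero, Matrix.cons_val_one, Matrix.head_cons,
    Matrix.cons_val_two, Matrix.cons_val_three, Matrix.cons_val_succ, Matrix.vecHead,
    Matrix.vecTail, Function.comp_apply] at k3
  refine ⟨(α₁ + α₂)⁻¹ • (α₂ • F 0 - J1 (deriv F 0)), (α₁ + α₂)⁻¹ • (deriv F 0 + α₂ • J1 (F 0)),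
      (α₁ + α₂)⁻¹ • (α₁ • F 0 + J1 (deriv F 0)), (α₁ + α₂)⁻¹ • (deriv F 0 - α₁ • J1 (F 0)),
      ?_, ?_, ?_, ?_, ?_, ?_, ?_, ?_, ?_, ?_, ?_⟩
  all_goals
    simp only [ip, J1, Matrix.cons_val_zero, Matrix.cons_val_one, Matrix.head_cons,
      Matrix.cons_val_two, Matrix.cons_val_three, Matrix.cons_val_succ, Matrix.vecHead,
      Matrix.vecTail, Function.comp_apply, Pi.smul_apply, Pi.add_apply, Pi.sub_apply,
      smul_eq_mul]
  -- g₁ g₂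
  · ring
  -- g₁ g₃
  · have key23 : α₁ * α₂ - (α₁ - α₂) * (Real.sin ϑ ^ 2 / τ) - a = 0 := by
      rw [har, hα₁r, hα₂r, hSin]; field_simp; ring
    linear_combination ((α₁ + α₂)⁻¹ ^ 2 * α₁ * α₂) * k1 + ((α₁ + α₂)⁻¹ ^ 2 * (α₁ - α₂)) * k3
      - ((α₁ + α₂)⁻¹ ^ 2) * k2 + ((α₁ + α₂)⁻¹ ^ 2) * key23
  -- g₁ g₄
  · linear_combination ((α₁ + α₂)⁻¹ ^ 2 * (α₁ + α₂)) * k4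
  -- g₂ g₃
  · linear_combination ((α₁ + α₂)⁻¹ ^ 2 * (α₁ + α₂)) * k4
  -- g₂ g₄
  · have key23 : α₁ * α₂ - (α₁ - α₂) * (Real.sin ϑ ^ 2 / τ) - a = 0 := by
      rw [har, hα₁r, hα₂r, hSin]; field_simp; ring
    linear_combination ((α₁ + α₂)⁻¹ ^ 2) * k2 + ((α₁ + α₂)⁻¹ ^ 2 * (α₂ - α₁)) * k3
      - ((α₁ + α₂)⁻¹ ^ 2 * α₁ * α₂) * k1 - ((α₁ + α₂)⁻¹ ^ 2) * key23
  -- g₃ g₄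
  · ring
  -- norms
  · have keyN1 : (α₁ + α₂)⁻¹ ^ 2 * (α₂ ^ 2 + 2 * α₂ * (-Real.sin ϑ ^ 2 / τ) + a)
        = -(τ * α₂) / (2 * B) := by
      rw [hsum, hSin, har, hα₂r, hrB]; field_simp; ring
    linear_combination ((α₁ + α₂)⁻¹ ^ 2 * α₂ ^ 2) * k1 + (2 * (α₁ + α₂)⁻¹ ^ 2 * α₂) * k3
      + ((α₁ + α₂)⁻¹ ^ 2) * k2 + keyN1
  · have keyN1 : (α₁ + α₂)⁻¹ ^ 2 * (α₂ ^ 2 + 2 * α₂ * (-Real.sin ϑ ^ 2 / τ) + a)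
        = -(τ * α₂) / (2 * B) := by
      rw [hsum, hSin, har, hα₂r, hrB]; field_simp; ring
    linear_combination ((α₁ + α₂)⁻¹ ^ 2 * α₂ ^ 2) * k1 + (2 * (α₁ + α₂)⁻¹ ^ 2 * α₂) * k3
      + ((α₁ + α₂)⁻¹ ^ 2) * k2 + keyN1
  · have keyN2 : (α₁ + α₂)⁻¹ ^ 2 * (α₁ ^ 2 - 2 * α₁ * (-Real.sin ϑ ^ 2 / τ) + a)
        = τ * α₁ / (2 * B) := by
      rw [hsum, hSin, har, hα₁r, hrB]; field_simp; ring
    linear_combination ((α₁ + α₂)⁻¹ ^ 2 * α₁ ^ 2) * k1 - (2 * (α₁ + α₂)⁻¹ ^ 2 * α₁) * k3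
      + ((α₁ + α₂)⁻¹ ^ 2) * k2 + keyN2
  · have keyN2 : (α₁ + α₂)⁻¹ ^ 2 * (α₁ ^ 2 - 2 * α₁ * (-Real.sin ϑ ^ 2 / τ) + a)
        = τ * α₁ / (2 * B) := by
      rw [hsum, hSin, har, hα₁r, hrB]; field_simp; ring
    linear_combination ((α₁ + α₂)⁻¹ ^ 2 * α₁ ^ 2) * k1 - (2 * (α₁ + α₂)⁻¹ ^ 2 * α₁) * k3
      + ((α₁ + α₂)⁻¹ ^ 2) * k2 + keyN2
  -- the formula
  · intro u
    have h1 := rot α₁ W₁ hW₁ u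
    have h2 := rot (-α₂) W₂ hW₂ u
    rw [show -α₂ * u = -(α₂ * u) by ring, Real.cos_neg, Real.sin_neg] at h2
    have hkey : (α₁ + α₂) • F u = Real.cos (α₁ * u) • (α₂ • F 0 - J1 (deriv F 0))
        + Real.sin (α₁ * u) • (deriv F 0 + α₂ • J1 (F 0))
        + Real.cos (α₂ * u) • (α₁ • F 0 + J1 (deriv F 0))
        + Real.sin (α₂ * u) • (deriv F 0 - α₁ • J1 (F 0)) := by
      funext i
      fin_cases i
      · have e1 := congrFun h1 1
        have e2 := congrFun h2 1
        simp [hW₁def, hW₂def, J1, Matrix.vecHead, Matrix.vecTail, Function.comp,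
          Pi.smul_apply, smul_eq_mul, Pi.sub_apply, Pi.add_apply, Matrix.cons_val_succ,
          show (2:Fin 3).succ = (3:Fin 4) from rfl] at e1 e2 ⊢
        linear_combination e1 - e2
      · have e1 := congrFun h1 0
        have e2 := congrFun h2 0
        simp [hW₁def, hW₂def, J1, Matrix.vecHead, Matrix.vecTail, Function.comp,
          Pi.smul_apply, smul_eq_mul, Pi.sub_apply, Pi.add_apply, Matrix.cons_val_succ,
          show (2:Fin 3).succ = (3:Fin 4) from rfl] at e1 e2 ⊢
        linear_combination e2 - e1
      · have e1 := congrFun h1 3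
        have e2 := congrFun h2 3
        simp [hW₁def, hW₂def, J1, Matrix.vecHead, Matrix.vecTail, Function.comp,
          Pi.smul_apply, smul_eq_mul, Pi.sub_apply, Pi.add_apply, Matrix.cons_val_succ,
          show (2:Fin 3).succ = (3:Fin 4) from rfl] at e1 e2 ⊢
        linear_combination e1 - e2
      · have e1 := congrFun h1 2
        have e2 := congrFun h2 2
        simp [hW₁def, hW₂def, J1, Matrix.vecHead, Matrix.vecTail, Function.comp,
          Pi.smul_apply, smul_eq_mul, Pi.sub_apply, Pi.add_apply, Matrix.cons_val_succ,
          show (2:Fin 3).succ = (3:Fin 4) from rfl] at e1 e2 ⊢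
        linear_combination e2 - e1
    have he : (α₁ + α₂) * (α₁ + α₂)⁻¹ = 1 := mul_inv_cancel₀ hsumne
    refine funext fun i => ?_
    fin_cases i
    · have hk := congrFun hkey 0
      simp [J1, Matrix.vecHead, Matrix.vecTail, Function.comp, Pi.smul_apply, smul_eq_mul,
        Pi.sub_apply, Pi.add_apply, Matrix.cons_val_succ,
        show (2:Fin 3).succ = (3:Fin 4) from rfl] at hk ⊢
      linear_combination (α₁ + α₂)⁻¹ * hk - F u 0 * he
    · have hk := congrFun hkey 1
      simp [J1, Matrix.vecHead, Matrix.vecTail, Function.comp, Pi.smul_apply, smul_eq_mul,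
        Pi.sub_apply, Pi.add_apply, Matrix.cons_val_succ,
        show (2:Fin 3).succ = (3:Fin 4) from rfl] at hk ⊢
      linear_combination (α₁ + α₂)⁻¹ * hk - F u 1 * he
    · have hk := congrFun hkey 2
      simp [J1, Matrix.vecHead, Matrix.vecTail, Function.comp, Pi.smul_apply, smul_eq_mul,
        Pi.sub_apply, Pi.add_apply, Matrix.cons_val_succ,
        show (2:Fin 3).succ = (3:Fin 4) from rfl] at hk ⊢
      linear_combination (α₁ + α₂)⁻¹ * hk - F u 2 * he
    · have hk := congrFun hkey 3
      simp [J1, Matrix.vecHead, Matrix.vecTail, Function.comp, Pi.smul_apply, smul_eq_mul,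
        Pi.sub_apply, Pi.add_apply, Matrix.cons_val_succ,
        show (2:Fin 3).succ = (3:Fin 4) from rfl] at hk ⊢
      linear_combination (α₁ + α₂)⁻¹ * hk - F u 3 * he
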